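/- arXiv:2110.13048 — 3 statements merged into one kernel-verified Lean document; each statement's English description precedes it below -/
import Mathlib

section
/- Let (Ω, μ) be a probability space, t : Ω → ℝ nonnegative and integrable, T > 0 a constant, and set ζ = 1/E[min(t,T)] (assumed finite and positive). Then for any measurable φ : Ω → ℝ with φ > 0 a.e. and E[φ] = 1, one has E[ζ²t²/φ] = E[(√φ − ζ·min(t,T)/√φ)²] + E[(ζ²(t² − T²)/φ)·1{t > T}] + 1. -/
/-!
Write `m = min t T`. Pointwise, for `φ > 0`,
`(√φ - ζ m / √φ)² = φ - 2 ζ m + ζ² m² / φ` and `(t² - T²) 1{t > T} = t² - m²`,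
so the right-hand side integrates to `E[φ] - 2 ζ E[m] + ζ² E[t² / φ] + 1`,
which is `ζ² E[t² / φ]` because `E[φ] = 1` and `ζ E[m] = 1`.
-/

open MeasureTheory

lemma Real.sqrt_sub_div_sqrt_sq {x : ℝ} (hx : 0 < x) (y : ℝ) :
    (√x - y / √x) ^ 2 = x - 2 * y + y ^ 2 / x := by
  have hs : √x ≠ 0 := (Real.sqrt_pos.mpr hx).ne'
  field_simp
  rw [Real.sq_sqrt hx.le]
  ring

lemma sq_sub_sq_mul_indicator_lt {α : Type*} (t : α → ℝ) (T : ℝ) (a : α) :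
    (t a ^ 2 - T ^ 2) * Set.indicator {a' | T < t a'} (fun _ => (1 : ℝ)) a
      = t a ^ 2 - min (t a) T ^ 2 := by
  by_cases h : T < t a
  · simp [h, min_eq_right h.le]
  · simp [h, min_eq_left (not_lt.mp h)]

section

variable {Ω : Type*} [MeasurableSpace Ω] {μ : Measure Ω}

lemma MeasureTheory.Integrable.sq_div_of_abs_le {a b φ : Ω → ℝ}
    (hb : Integrable (fun ω => b ω ^ 2 / φ ω) μ) (ha : AEStronglyMeasurable a μ)
    (hφ : AEStronglyMeasurable φ μ) (hab : ∀ᵐ ω ∂μ, |a ω| ≤ |b ω|) :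
    Integrable (fun ω => a ω ^ 2 / φ ω) μ := by
  refine hb.mono ((ha.pow 2).div₀ hφ) (hab.mono fun ω h => ?_)
  simp only [norm_div, norm_pow, Real.norm_eq_abs, sq_abs]
  exact div_le_div_of_nonneg_right (sq_le_sq.mpr h) (abs_nonneg _)

lemma integral_sqrt_sub_div_sqrt_sq {φ a : Ω → ℝ} (c : ℝ) (hφ_pos : ∀ᵐ ω ∂μ, 0 < φ ω)
    (hφ : Integrable φ μ) (ha : Integrable a μ)
    (ha2 : Integrable (fun ω => a ω ^ 2 / φ ω) μ) :
    ∫ ω, (√(φ ω) - c * a ω / √(φ ω)) ^ 2 ∂μ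
      = ∫ ω, φ ω ∂μ - 2 * c * ∫ ω, a ω ∂μ + c ^ 2 * ∫ ω, a ω ^ 2 / φ ω ∂μ := by
  have hpointwise : (fun ω => (√(φ ω) - c * a ω / √(φ ω)) ^ 2)
      =ᵐ[μ] fun ω => φ ω - 2 * c * a ω + c ^ 2 * (a ω ^ 2 / φ ω) :=
    hφ_pos.mono fun ω hω => by
      simp only
      rw [Real.sqrt_sub_div_sqrt_sq hω]
      ring
  rw [integral_congr_ae hpointwise,
    integral_add (f := fun ω => φ ω - 2 * c * a ω) (hφ.sub (ha.const_mul _)) (ha2.const_mul _),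
    integral_sub hφ (ha.const_mul _), integral_const_mul, integral_const_mul]

lemma integral_sq_sub_sq_div_mul_indicator {t φ : Ω → ℝ} (c T : ℝ)
    (ht : Integrable (fun ω => t ω ^ 2 / φ ω) μ)
    (hm : Integrable (fun ω => min (t ω) T ^ 2 / φ ω) μ) :
    ∫ ω, (c ^ 2 * (t ω ^ 2 - T ^ 2) / φ ω)
        * Set.indicator {ω' | T < t ω'} (fun _ => (1 : ℝ)) ω ∂μ
      = c ^ 2 * (∫ ω, t ω ^ 2 / φ ω ∂μ - ∫ ω, min (t ω) T ^ 2 / φ ω ∂μ) := by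
  have hpointwise : (fun ω => (c ^ 2 * (t ω ^ 2 - T ^ 2) / φ ω)
      * Set.indicator {ω' | T < t ω'} (fun _ => (1 : ℝ)) ω)
      = fun ω => c ^ 2 * (t ω ^ 2 / φ ω - min (t ω) T ^ 2 / φ ω) := by
    funext ω
    rw [← sub_div, ← sq_sub_sq_mul_indicator_lt t T ω]
    ring
  rw [hpointwise, integral_const_mul, integral_sub ht hm]

end

theorem stmt_5_general {Ω : Type*} [MeasurableSpace Ω] (μ : Measure Ω) [IsProbabilityMeasure μ]
    (t φ : Ω → ℝ) (T : ℝ) (hT : 0 < T)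
    (ht_nonneg : ∀ ω, 0 ≤ t ω) (ht_int : Integrable t μ)
    (hφ_pos : ∀ᵐ ω ∂μ, 0 < φ ω) (hφ_int : Integrable φ μ) (hφ_one : ∫ ω, φ ω ∂μ = 1)
    (hmin_pos : 0 < ∫ ω, min (t ω) T ∂μ)
    (hint : Integrable (fun ω => t ω ^ 2 / φ ω) μ)
    (ζ : ℝ) (hζ : ζ = 1 / ∫ ω, min (t ω) T ∂μ) :
    ∫ ω, ζ ^ 2 * t ω ^ 2 / φ ω ∂μ
      = ∫ ω, (Real.sqrt (φ ω) - ζ * min (t ω) T / Real.sqrt (φ ω)) ^ 2 ∂μ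
        + ∫ ω, (ζ ^ 2 * (t ω ^ 2 - T ^ 2) / φ ω)
            * Set.indicator {ω' | T < t ω'} (fun _ => (1 : ℝ)) ω ∂μ
        + 1 := by
  have hmin_int : Integrable (fun ω => min (t ω) T) μ := ht_int.inf (integrable_const T)
  have hmin_sq_int : Integrable (fun ω => min (t ω) T ^ 2 / φ ω) μ :=
    hint.sq_div_of_abs_le hmin_int.aestronglyMeasurable hφ_int.aestronglyMeasurable
      (ae_of_all _ fun ω => by
        rw [abs_of_nonneg (le_min (ht_nonneg ω) hT.le), abs_of_nonneg (ht_nonneg ω)]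
        exact min_le_left _ _)
  have hζ_min : ζ * ∫ ω, min (t ω) T ∂μ = 1 := by
    rw [hζ, one_div_mul_cancel hmin_pos.ne']
  have hlhs : ∫ ω, ζ ^ 2 * t ω ^ 2 / φ ω ∂μ = ζ ^ 2 * ∫ ω, t ω ^ 2 / φ ω ∂μ := by
    simp_rw [mul_div_assoc, integral_const_mul]
  rw [hlhs, integral_sqrt_sub_div_sqrt_sq ζ hφ_pos hφ_int hmin_int hmin_sq_int,
    integral_sq_sub_sq_div_mul_indicator ζ T hint hmin_sq_int, hφ_one]
  linear_combination 2 * hζ_min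

theorem stmt_5 {Ω : Type*} [MeasurableSpace Ω] (μ : Measure Ω) [IsProbabilityMeasure μ]
    (t φ : Ω → ℝ) (T : ℝ) (hT : 0 < T)
    (ht_meas : Measurable t) (hφ_meas : Measurable φ)
    (ht_nonneg : ∀ ω, 0 ≤ t ω) (ht_int : Integrable t μ)
    (hφ_pos : ∀ᵐ ω ∂μ, 0 < φ ω) (hφ_int : Integrable φ μ) (hφ_one : ∫ ω, φ ω ∂μ = 1)
    (hmin_pos : 0 < ∫ ω, min (t ω) T ∂μ)
    (hint : Integrable (fun ω => t ω ^ 2 / φ ω) μ)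
    (ζ : ℝ) (hζ : ζ = 1 / ∫ ω, min (t ω) T ∂μ) :
    ∫ ω, ζ ^ 2 * t ω ^ 2 / φ ω ∂μ
      = ∫ ω, (Real.sqrt (φ ω) - ζ * min (t ω) T / Real.sqrt (φ ω)) ^ 2 ∂μ
        + ∫ ω, (ζ ^ 2 * (t ω ^ 2 - T ^ 2) / φ ω)
            * Set.indicator {ω' | T < t ω'} (fun _ => (1 : ℝ)) ω ∂μ
        + 1 :=
  stmt_5_general μ t φ T hT ht_nonneg ht_int hφ_pos hφ_int hφ_one hmin_pos hint ζ hζ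
end

section
/- Let X be a random vector in ℝ^d, w : ℝ^d → ℝ a positive measurable weight, κ : ℝ^d → ℝ a measurable function with κ ≥ 1 a.e., and G : ℝ^d → ℝ^d measurable. Assume M = E[w(X)·G(X)G(X)ᵀ], S = E[κ(X)·w(X)·G(X)G(X)ᵀ], and Λ = E[κ(X)^{-1}·w(X)·G(X)G(X)ᵀ] are all finite, with M and Λ positive definite. Then M^{-1} S M^{-1} − Λ^{-1} is positive semidefinite. -/
/-!
Put `u = M⁻¹ x` and `v = Λ⁻¹ x`. Since `M u = x`, the cross term `uᵀ M v` equals `xᵀ Λ⁻¹ x = vᵀ Λ v`,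
so `xᵀ (M⁻¹ S M⁻¹ - Λ⁻¹) x = uᵀ S u - 2 uᵀ M v + vᵀ Λ v`. Writing `a = uᵀ G` and `b = vᵀ G`, this is
the expectation of `κ w a² - 2 w a b + κ⁻¹ w b² = κ⁻¹ w (κ a - b)² ≥ 0`.
-/

open MeasureTheory Matrix

section LinearAlgebra

variable {ι : Type*} [Fintype ι] [DecidableEq ι]

lemma Matrix.posSemidef_inv_mul_mul_inv_sub_inv {M S Λ : Matrix ι ι ℝ}
    (hM : M.IsHermitian) (hMu : IsUnit M.det) (hS : S.IsHermitian)
    (hΛ : Λ.IsHermitian) (hΛu : IsUnit Λ.det)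
    (h : ∀ u v, 2 * (u ⬝ᵥ M *ᵥ v) ≤ u ⬝ᵥ S *ᵥ u + v ⬝ᵥ Λ *ᵥ v) :
    (M⁻¹ * S * M⁻¹ - Λ⁻¹).PosSemidef := by
  have hMinv : M⁻¹ᵀ = M⁻¹ := hM.inv
  have hSandwich : (M⁻¹ * S * M⁻¹).IsHermitian := by
    rw [IsHermitian, conjTranspose_mul, conjTranspose_mul, hM.inv.eq, hS.eq, mul_assoc]
  refine posSemidef_iff_dotProduct_mulVec.mpr ⟨hSandwich.sub hΛ.inv, fun x => ?_⟩
  set u := M⁻¹ *ᵥ x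
  set v := Λ⁻¹ *ᵥ x
  have hSu : x ⬝ᵥ (M⁻¹ * S * M⁻¹) *ᵥ x = u ⬝ᵥ S *ᵥ u := by
    rw [← mulVec_mulVec, ← mulVec_mulVec, dotProduct_mulVec, ← mulVec_transpose, hMinv]
  have hΛv : x ⬝ᵥ Λ⁻¹ *ᵥ x = v ⬝ᵥ Λ *ᵥ v := by
    rw [mulVec_mulVec, mul_nonsing_inv _ hΛu, one_mulVec, dotProduct_comm]
  have hMuv : u ⬝ᵥ M *ᵥ v = v ⬝ᵥ Λ *ᵥ v := by
    rw [dotProduct_mulVec, ← mulVec_transpose, show Mᵀ = M from hM.eq, mulVec_mulVec,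
      mul_nonsing_inv _ hMu, one_mulVec, hΛv]
  rw [star_trivial, sub_mulVec, dotProduct_sub, hSu, hΛv]
  linarith [h u v]

end LinearAlgebra

section WeightedGram

variable {Ω ι : Type*} [MeasurableSpace Ω] {μ : Measure Ω} {f : Ω → ℝ} {G : Ω → ι → ℝ}

lemma isHermitian_of_eq_integral {A : Matrix ι ι ℝ}
    (hA : ∀ i j, A i j = ∫ ω, f ω * (G ω i * G ω j) ∂μ) : A.IsHermitian := by
  ext i j
  simp only [conjTranspose_apply, star_trivial, hA, mul_comm (G _ i)]

variable [Fintype ι]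

lemma mul_dotProduct_mul_dotProduct_eq_sum (c : ℝ) (g u v : ι → ℝ) :
    c * ((u ⬝ᵥ g) * (v ⬝ᵥ g)) = ∑ i, ∑ j, u i * v j * (c * (g i * g j)) := by
  rw [dotProduct, dotProduct, Finset.sum_mul_sum, Finset.mul_sum]
  exact Finset.sum_congr rfl fun i _ => by
    rw [Finset.mul_sum]
    exact Finset.sum_congr rfl fun j _ => by ring

lemma integrable_mul_dotProduct_mul_dotProduct
    (hint : ∀ i j, Integrable (fun ω => f ω * (G ω i * G ω j)) μ) (u v : ι → ℝ) :
    Integrable (fun ω => f ω * ((u ⬝ᵥ G ω) * (v ⬝ᵥ G ω))) μ := by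
  simp only [mul_dotProduct_mul_dotProduct_eq_sum]
  exact integrable_finsetSum _ fun i _ =>
    integrable_finsetSum _ fun j _ => (hint i j).const_mul _

lemma dotProduct_mulVec_eq_integral
    (hint : ∀ i j, Integrable (fun ω => f ω * (G ω i * G ω j)) μ)
    {A : Matrix ι ι ℝ} (hA : ∀ i j, A i j = ∫ ω, f ω * (G ω i * G ω j) ∂μ) (u v : ι → ℝ) :
    u ⬝ᵥ A *ᵥ v = ∫ ω, f ω * ((u ⬝ᵥ G ω) * (v ⬝ᵥ G ω)) ∂μ := by
  simp only [mul_dotProduct_mul_dotProduct_eq_sum]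
  rw [integral_finsetSum _ fun i _ =>
    integrable_finsetSum _ fun j _ => (hint i j).const_mul _]
  simp only [dotProduct, mulVec, Finset.mul_sum]
  refine Finset.sum_congr rfl fun i _ => ?_
  rw [integral_finsetSum _ fun j _ => (hint i j).const_mul _]
  refine Finset.sum_congr rfl fun j _ => ?_
  rw [integral_const_mul, hA]
  ring

end WeightedGram

lemma two_mul_mul_le_mul_add_inv_mul {k w : ℝ} (hk : 0 < k) (hw : 0 ≤ w) (a b : ℝ) :
    2 * (w * (a * b)) ≤ k * w * (a * a) + k⁻¹ * w * (b * b) := by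
  have key : k * w * (a * a) + k⁻¹ * w * (b * b) - 2 * (w * (a * b))
      = k⁻¹ * w * (k * a - b) ^ 2 := by
    field_simp
    ring
  exact sub_nonneg.mp (key ▸ by positivity)

theorem stmt_7_general {Ω : Type*} [MeasurableSpace Ω] (μ : Measure Ω)
    {d : ℕ} (W K : Ω → ℝ) (G : Ω → Fin d → ℝ)
    (hW : ∀ᵐ ω ∂μ, 0 < W ω) (hK : ∀ᵐ ω ∂μ, 1 ≤ K ω)
    (M S Λ : Matrix (Fin d) (Fin d) ℝ)
    (hMint : ∀ i j, Integrable (fun ω => W ω * (G ω i * G ω j)) μ)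
    (hSint : ∀ i j, Integrable (fun ω => K ω * W ω * (G ω i * G ω j)) μ)
    (hΛint : ∀ i j, Integrable (fun ω => (K ω)⁻¹ * W ω * (G ω i * G ω j)) μ)
    (hM : ∀ i j, M i j = ∫ ω, W ω * (G ω i * G ω j) ∂μ)
    (hS : ∀ i j, S i j = ∫ ω, K ω * W ω * (G ω i * G ω j) ∂μ)
    (hΛ : ∀ i j, Λ i j = ∫ ω, (K ω)⁻¹ * W ω * (G ω i * G ω j) ∂μ)
    (hMpd : M.PosDef) (hΛpd : Λ.PosDef) :
    (M⁻¹ * S * M⁻¹ - Λ⁻¹).PosSemidef := by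
  refine posSemidef_inv_mul_mul_inv_sub_inv hMpd.1 ((isUnit_iff_isUnit_det M).mp hMpd.isUnit)
    (isHermitian_of_eq_integral hS) hΛpd.1 ((isUnit_iff_isUnit_det Λ).mp hΛpd.isUnit)
    fun u v => ?_
  rw [dotProduct_mulVec_eq_integral hMint hM, dotProduct_mulVec_eq_integral hSint hS,
    dotProduct_mulVec_eq_integral hΛint hΛ, ← integral_const_mul,
    ← integral_add (integrable_mul_dotProduct_mul_dotProduct hSint u u)
      (integrable_mul_dotProduct_mul_dotProduct hΛint v v)]
  refine integral_mono_ae ((integrable_mul_dotProduct_mul_dotProduct hMint u v).const_mul 2)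
    ((integrable_mul_dotProduct_mul_dotProduct hSint u u).add
      (integrable_mul_dotProduct_mul_dotProduct hΛint v v)) ?_
  filter_upwards [hW, hK] with ω hWω hKω
  exact two_mul_mul_le_mul_add_inv_mul (one_pos.trans_le hKω) hWω.le _ _

theorem stmt_7 {Ω : Type*} [MeasurableSpace Ω] (μ : Measure Ω) [IsProbabilityMeasure μ]
    {d : ℕ} (W K : Ω → ℝ) (G : Ω → Fin d → ℝ)
    (hW : ∀ᵐ ω ∂μ, 0 < W ω) (hK : ∀ᵐ ω ∂μ, 1 ≤ K ω)
    (M S Λ : Matrix (Fin d) (Fin d) ℝ)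
    (hMint : ∀ i j, Integrable (fun ω => W ω * (G ω i * G ω j)) μ)
    (hSint : ∀ i j, Integrable (fun ω => K ω * W ω * (G ω i * G ω j)) μ)
    (hΛint : ∀ i j, Integrable (fun ω => (K ω)⁻¹ * W ω * (G ω i * G ω j)) μ)
    (hM : ∀ i j, M i j = ∫ ω, W ω * (G ω i * G ω j) ∂μ)
    (hS : ∀ i j, S i j = ∫ ω, K ω * W ω * (G ω i * G ω j) ∂μ)
    (hΛ : ∀ i j, Λ i j = ∫ ω, (K ω)⁻¹ * W ω * (G ω i * G ω j) ∂μ)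
    (hMpd : M.PosDef) (hΛpd : Λ.PosDef) :
    (M⁻¹ * S * M⁻¹ - Λ⁻¹).PosSemidef :=
  stmt_7_general μ W K G hW hK M S Λ hMint hSint hΛint hM hS hΛ hMpd hΛpd
end

section
/- Let y ∈ {0,1} with P(y=1|x) = p(x) ∈ (0,1), let r = ρφ(x) ∈ (0,1] and q(x) = e^{g(x)−log r}/(1+e^{g(x)−log r}) where g(x) = log(p(x)/(1−p(x))), and let δ = y + (1−y)·1{u ≤ r} with u uniform on (0,1) independent of y. Then E[δ·(y − q(x)) | x] = 0. -/
/-! Split the score on the value of `Y`. On `{Y = 1}` every point is sampled and contributes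
`1 - q`; on `{Y = 0}` a fraction `r` is sampled and contributes `-q`. The expectation is therefore
`p (1 - q) - (1 - p) r q`, which vanishes because shifting the log odds by `-log r` turns the
odds `p / (1 - p)` into `q / (1 - q) = p / ((1 - p) r)`. -/

open MeasureTheory Real

lemma mul_one_sub_eq_of_eq_logistic_log_odds_sub_log {p r q : ℝ} (hp0 : 0 < p) (hp1 : p < 1)
    (hr0 : 0 < r)
    (hq : q = exp (log (p / (1 - p)) - log r) / (1 + exp (log (p / (1 - p)) - log r))) :
    p * (1 - q) = (1 - p) * r * q := by
  have hp1' : 0 < 1 - p := by linarith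
  rw [exp_sub, exp_log (by positivity), exp_log hr0] at hq
  rw [hq]
  field_simp
  ring

section ZeroOneScore

variable {Ω : Type*} {Y δ : Ω → ℝ}

lemma mul_sub_eq_indicator_sub_indicator (hY01 : ∀ ω, Y ω = 0 ∨ Y ω = 1)
    (hδ01 : ∀ ω, δ ω = 0 ∨ δ ω = 1) (hpos : ∀ ω, Y ω = 1 → δ ω = 1) (q : ℝ) (ω : Ω) :
    δ ω * (Y ω - q) = (1 - q) * {ω | Y ω = 1}.indicator 1 ω
      - q * ({ω | δ ω = 1} ∩ {ω | Y ω = 0}).indicator 1 ω := by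
  rcases hY01 ω with hY | hY
  · rcases hδ01 ω with hδ | hδ <;> simp [Set.indicator, hY, hδ]
  · simp [Set.indicator, hY, hpos ω hY]

lemma integral_mul_sub_eq_measureReal [MeasurableSpace Ω] (μ : Measure Ω) [IsFiniteMeasure μ]
    (hY : Measurable Y) (hδ : Measurable δ) (hY01 : ∀ ω, Y ω = 0 ∨ Y ω = 1)
    (hδ01 : ∀ ω, δ ω = 0 ∨ δ ω = 1) (hpos : ∀ ω, Y ω = 1 → δ ω = 1) (q : ℝ) :
    ∫ ω, δ ω * (Y ω - q) ∂μ
      = (1 - q) * μ.real {ω | Y ω = 1} - q * μ.real ({ω | δ ω = 1} ∩ {ω | Y ω = 0}) := by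
  have hA : MeasurableSet {ω | Y ω = 1} := hY (measurableSet_singleton 1)
  have hC : MeasurableSet ({ω | δ ω = 1} ∩ {ω | Y ω = 0}) :=
    (hδ (measurableSet_singleton 1)).inter (hY (measurableSet_singleton 0))
  simp_rw [mul_sub_eq_indicator_sub_indicator hY01 hδ01 hpos q]
  rw [integral_sub (((integrable_const 1).indicator hA).const_mul _)
      (((integrable_const 1).indicator hC).const_mul _),
    integral_const_mul, integral_const_mul, integral_indicator_one hA, integral_indicator_one hC]

end ZeroOneScore

theorem stmt_11_general {Ω : Type*} [MeasurableSpace Ω] (μ : Measure Ω) [IsProbabilityMeasure μ]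
    (Y δ : Ω → ℝ) (hY : Measurable Y) (hδ : Measurable δ)
    (hY01 : ∀ ω, Y ω = 0 ∨ Y ω = 1) (hδ01 : ∀ ω, δ ω = 0 ∨ δ ω = 1)
    (p r : ℝ) (hp0 : 0 < p) (hp1 : p < 1) (hr0 : 0 < r)
    (hPY : μ {ω | Y ω = 1} = ENNReal.ofReal p)
    (hpos : ∀ ω, Y ω = 1 → δ ω = 1)
    (hneg : μ ({ω | δ ω = 1} ∩ {ω | Y ω = 0}) = ENNReal.ofReal r * μ {ω | Y ω = 0})
    (g q : ℝ) (hg : g = Real.log (p / (1 - p)))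
    (hq : q = Real.exp (g - Real.log r) / (1 + Real.exp (g - Real.log r))) :
    ∫ ω, δ ω * (Y ω - q) ∂μ = 0 := by
  have hA : MeasurableSet {ω | Y ω = 1} := hY (measurableSet_singleton 1)
  have hY0 : {ω | Y ω = 0} = {ω | Y ω = 1}ᶜ := by
    ext ω
    rcases hY01 ω with h | h <;> simp [h]
  have hμY1 : μ.real {ω | Y ω = 1} = p := by
    rw [measureReal_def, hPY, ENNReal.toReal_ofReal hp0.le]
  have hμY0 : μ.real {ω | Y ω = 0} = 1 - p := by
    rw [hY0, probReal_compl_eq_one_sub hA, hμY1]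
  have hμsampled : μ.real ({ω | δ ω = 1} ∩ {ω | Y ω = 0}) = r * (1 - p) := by
    rw [measureReal_def, hneg, ENNReal.toReal_mul, ENNReal.toReal_ofReal hr0.le,
      ← measureReal_def, hμY0]
  subst hg
  rw [integral_mul_sub_eq_measureReal μ hY hδ hY01 hδ01 hpos, hμY1, hμsampled]
  linear_combination mul_one_sub_eq_of_eq_logistic_log_odds_sub_log hp0 hp1 hr0 hq

theorem stmt_11 {Ω : Type*} [MeasurableSpace Ω] (μ : Measure Ω) [IsProbabilityMeasure μ]
    (Y δ : Ω → ℝ) (hY : Measurable Y) (hδ : Measurable δ)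
    (hY01 : ∀ ω, Y ω = 0 ∨ Y ω = 1) (hδ01 : ∀ ω, δ ω = 0 ∨ δ ω = 1)
    (p r : ℝ) (hp0 : 0 < p) (hp1 : p < 1) (hr0 : 0 < r) (hr1 : r ≤ 1)
    (hPY : μ {ω | Y ω = 1} = ENNReal.ofReal p)
    (hpos : ∀ ω, Y ω = 1 → δ ω = 1)
    (hneg : μ ({ω | δ ω = 1} ∩ {ω | Y ω = 0}) = ENNReal.ofReal r * μ {ω | Y ω = 0})
    (g q : ℝ) (hg : g = Real.log (p / (1 - p)))
    (hq : q = Real.exp (g - Real.log r) / (1 + Real.exp (g - Real.log r))) :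
    ∫ ω, δ ω * (Y ω - q) ∂μ = 0 :=
  stmt_11_general μ Y δ hY hδ hY01 hδ01 p r hp0 hp1 hr0 hPY hpos hneg g q hg hq
end
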